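/- arXiv:1909.04094 — 2 statements merged into one kernel-verified Lean document; each statement's English description precedes it below -/
import Mathlib

section
/- Let p, q be non-constant one-variable holomorphic polynomials, S = { (z,w) ∈ ℂ² : q(w) = conj(p(z)) }, and (z₀, w₀) ∈ S with p'(z₀) ≠ 0 and q'(w₀) ≠ 0. Then near (z₀, w₀), S is a totally real 2-dimensional real submanifold of ℂ²: the real tangent space T of S at (z₀,w₀) satisfies T ∩ iT = {0}. -/
/-!
Write `a = p'(z₀)`, `b = q'(w₀)` and `ρ = (Re F, Im G)` with `F = p(z) - q(w)`, `G = -p(z) - q(w)`.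
Since `dF = a dz - b dw` and `dG = -a dz - b dw` are `ℂ`-linear, `Re dF` vanishing on both `v` and
`i v` forces `dF v = 0`, and likewise `dG v = 0`. Subtracting, `a v₁ = b v₂ = 0`, so `v = 0`.
-/

open Complex Polynomial

namespace Complex

theorem eq_zero_of_re_eq_zero_of_re_I_mul_eq_zero {z : ℂ} (h : z.re = 0) (hI : (I * z).re = 0) :
    z = 0 := by
  rw [I_mul_re, neg_eq_zero] at hI
  exact Complex.ext h hI

theorem eq_zero_of_im_eq_zero_of_im_I_mul_eq_zero {z : ℂ} (h : z.im = 0) (hI : (I * z).im = 0) :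
    z = 0 := by
  rw [I_mul_im] at hI
  exact Complex.ext hI h

end Complex

section RealPartOfHolomorphic

variable {E : Type*} [NormedAddCommGroup E] [NormedSpace ℂ E] {F : E → ℂ} {L : E →L[ℂ] ℂ}
  {x₀ : E}

theorem HasFDerivAt.fderiv_re_apply (hF : HasFDerivAt F L x₀) (v : E) :
    fderiv ℝ (fun x => (F x).re) x₀ v = (L v).re :=
  congrArg (· v) (reCLM.hasFDerivAt.comp x₀ (hF.restrictScalars ℝ)).fderiv

theorem HasFDerivAt.fderiv_im_apply (hF : HasFDerivAt F L x₀) (v : E) :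
    fderiv ℝ (fun x => (F x).im) x₀ v = (L v).im :=
  congrArg (· v) (imCLM.hasFDerivAt.comp x₀ (hF.restrictScalars ℝ)).fderiv

theorem HasFDerivAt.apply_eq_zero_of_fderiv_re (hF : HasFDerivAt F L x₀) {v : E}
    (h : fderiv ℝ (fun x => (F x).re) x₀ v = 0)
    (hI : fderiv ℝ (fun x => (F x).re) x₀ (I • v) = 0) : L v = 0 := by
  rw [hF.fderiv_re_apply] at h hI
  rw [L.map_smul, smul_eq_mul] at hI
  exact eq_zero_of_re_eq_zero_of_re_I_mul_eq_zero h hI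

theorem HasFDerivAt.apply_eq_zero_of_fderiv_im (hF : HasFDerivAt F L x₀) {v : E}
    (h : fderiv ℝ (fun x => (F x).im) x₀ v = 0)
    (hI : fderiv ℝ (fun x => (F x).im) x₀ (I • v) = 0) : L v = 0 := by
  rw [hF.fderiv_im_apply] at h hI
  rw [L.map_smul, smul_eq_mul] at hI
  exact eq_zero_of_im_eq_zero_of_im_I_mul_eq_zero h hI

end RealPartOfHolomorphic

theorem totally_real_tangent_general (p q : Polynomial ℂ) (z₀ w₀ : ℂ)
    (hp' : (derivative p).eval z₀ ≠ 0) (hq' : (derivative q).eval w₀ ≠ 0) :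
    ∀ x : ℂ × ℂ,
      (fderiv ℝ (fun zw : ℂ × ℂ => (p.eval zw.1 - q.eval zw.2).re) (z₀, w₀)) x = 0 →
      (fderiv ℝ (fun zw : ℂ × ℂ => (-(p.eval zw.1) - q.eval zw.2).im) (z₀, w₀)) x = 0 →
      (fderiv ℝ (fun zw : ℂ × ℂ => (p.eval zw.1 - q.eval zw.2).re) (z₀, w₀))
        (Complex.I • x) = 0 →
      (fderiv ℝ (fun zw : ℂ × ℂ => (-(p.eval zw.1) - q.eval zw.2).im) (z₀, w₀))
        (Complex.I • x) = 0 →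
      x = 0 := by
  intro x hre him hreI himI
  have hP := (p.hasDerivAt z₀).comp_hasFDerivAt (z₀, w₀) (hasFDerivAt_fst (𝕜 := ℂ))
  have hQ := (q.hasDerivAt w₀).comp_hasFDerivAt (z₀, w₀) (hasFDerivAt_snd (𝕜 := ℂ))
  have hF := (hP.sub hQ).apply_eq_zero_of_fderiv_re hre hreI
  have hG := (hP.neg.sub hQ).apply_eq_zero_of_fderiv_im him himI
  simp only [sub_apply, neg_apply, smul_apply, ContinuousLinearMap.coe_fst',
    ContinuousLinearMap.coe_snd', smul_eq_mul] at hF hG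
  have hx₁ : (derivative p).eval z₀ * x.1 = 0 := by linear_combination (hF - hG) / 2
  have hx₂ : (derivative q).eval w₀ * x.2 = 0 := by linear_combination -(hF + hG) / 2
  exact Prod.ext ((mul_eq_zero.mp hx₁).resolve_left hp') ((mul_eq_zero.mp hx₂).resolve_left hq')

theorem totally_real_tangent (p q : Polynomial ℂ)
    (hp : 0 < p.natDegree) (hq : 0 < q.natDegree) (z₀ w₀ : ℂ)
    (hS : q.eval w₀ = starRingEnd ℂ (p.eval z₀))
    (hp' : (derivative p).eval z₀ ≠ 0) (hq' : (derivative q).eval w₀ ≠ 0) :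
    ∀ x : ℂ × ℂ,
      (fderiv ℝ (fun zw : ℂ × ℂ => (p.eval zw.1 - q.eval zw.2).re) (z₀, w₀)) x = 0 →
      (fderiv ℝ (fun zw : ℂ × ℂ => (-(p.eval zw.1) - q.eval zw.2).im) (z₀, w₀)) x = 0 →
      (fderiv ℝ (fun zw : ℂ × ℂ => (p.eval zw.1 - q.eval zw.2).re) (z₀, w₀))
        (Complex.I • x) = 0 →
      (fderiv ℝ (fun zw : ℂ × ℂ => (-(p.eval zw.1) - q.eval zw.2).im) (z₀, w₀))
        (Complex.I • x) = 0 →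
      x = 0 :=
  totally_real_tangent_general p q z₀ w₀ hp' hq'
end

section
/- Let K ⊂ ℂⁿ be compact with P(K) = C(K), i.e., every continuous function on K is a uniform limit of holomorphic polynomials. Then every closed subset L ⊂ K is polynomially convex and satisfies P(L) = C(L). -/
open Complex Metric

/-- The polynomially convex hull of a compact set in ℂⁿ. -/
def polyHull {n : ℕ} (K : Set (EuclideanSpace ℂ (Fin n))) : Set (EuclideanSpace ℂ (Fin n)) :=
  {z | ∀ P : MvPolynomial (Fin n) ℂ,
    ‖MvPolynomial.eval (fun j => z j) P‖ ≤
      sSup ((fun w : EuclideanSpace ℂ (Fin n) => ‖MvPolynomial.eval (fun j => w j) P‖) '' K)}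

/-
A point `a ∉ L` is separated from `L` by a polynomial: approximating the conjugate coordinates
`conj (zⱼ - aⱼ)` on `L` by polynomials `Qⱼ`, the polynomial `P = ∑ⱼ (zⱼ - aⱼ) Qⱼ` vanishes at `a`
and is uniformly close to `‖z - a‖²` on `L`, which is bounded below by `dist(a, L)² > 0`.
Hence `c - P`, with `c ≥ ‖z - a‖²` on `L`, has modulus `< c` on `L` but equals `c` at `a`.
Approximation on a closed subset `L ⊆ K` is inherited from `K` by Tietze extension.
-/

open MvPolynomial ComplexConjugate

variable {n : ℕ}

/-- `P(K) = C(K)`. -/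
def HasPolynomialApproximation (K : Set (EuclideanSpace ℂ (Fin n))) : Prop :=
  ∀ f : C(K, ℂ), ∀ ε > 0, ∃ P : MvPolynomial (Fin n) ℂ,
    ∀ z : K, ‖f z - eval (fun j => (z : EuclideanSpace ℂ (Fin n)) j) P‖ < ε

theorem continuous_eval_coord (P : MvPolynomial (Fin n) ℂ) :
    Continuous fun w : EuclideanSpace ℂ (Fin n) => eval (fun j => w j) P :=
  (continuous_eval P).comp (continuous_pi fun j => (EuclideanSpace.proj j).continuous)

theorem HasPolynomialApproximation.mono {K L : Set (EuclideanSpace ℂ (Fin n))}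
    (hK : HasPolynomialApproximation K) (hL : IsClosed L) (hLK : L ⊆ K) :
    HasPolynomialApproximation L := by
  intro f ε hε
  obtain ⟨F, rfl⟩ := f.exists_restrict_eq hL
  obtain ⟨P, hP⟩ := hK (F.restrict K) ε hε
  exact ⟨P, fun z => hP ⟨z, hLK z.2⟩⟩

theorem HasPolynomialApproximation.exists_eval_eq_zero_near_normSq
    {L : Set (EuclideanSpace ℂ (Fin n))} (hL : HasPolynomialApproximation L)
    (hLb : Bornology.IsBounded L) (a : EuclideanSpace ℂ (Fin n)) {ε : ℝ} (hε : 0 < ε) :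
    ∃ P : MvPolynomial (Fin n) ℂ, eval (fun j => a j) P = 0 ∧
      ∀ w ∈ L, ‖eval (fun j => w j) P - (‖w - a‖ : ℂ) ^ 2‖ < ε := by
  obtain ⟨R, hR⟩ := hLb.subset_closedBall a
  obtain ⟨δ, hδ, hRδ⟩ := exists_pos_mul_lt hε (n * R)
  choose Q hQ using fun j => hL ⟨fun w => conj ((w : EuclideanSpace ℂ (Fin n)) j - a j),
    by fun_prop⟩ δ hδ
  refine ⟨∑ j, (X j - C (a j)) * Q j, by simp, fun w hw => ?_⟩
  have hnormSq : (‖w - a‖ : ℂ) ^ 2 = ∑ j, (w j - a j) * conj (w j - a j) := by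
    rw [← ofReal_pow, PiLp.norm_sq_eq_of_L2]
    push_cast
    simp only [mul_conj', PiLp.sub_apply]
  have hcoord (j : Fin n) : ‖w j - a j‖ ≤ R :=
    (PiLp.norm_apply_le (w - a) j).trans (mem_closedBall_iff_norm.1 (hR hw))
  calc ‖eval (fun j => w j) (∑ j, (X j - C (a j)) * Q j) - (‖w - a‖ : ℂ) ^ 2‖
      = ‖∑ j, (w j - a j) * (eval (fun i => w i) (Q j) - conj (w j - a j))‖ := by
        simp [hnormSq, mul_sub]
    _ ≤ ∑ _j : Fin n, R * δ := by
        refine norm_sum_le_of_le _ fun j _ => ?_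
        rw [norm_mul, norm_sub_rev (eval _ _)]
        exact mul_le_mul (hcoord j) (hQ j ⟨w, hw⟩).le (norm_nonneg _)
          ((norm_nonneg _).trans (hcoord j))
    _ = n * R * δ := by simp [mul_assoc]
    _ < ε := hRδ

theorem norm_ofReal_sub_lt {c d : ℝ} {z : ℂ} (hdc : d ≤ c) (hz : ‖z - d‖ < d) :
    ‖(c : ℂ) - z‖ < ‖(c : ℂ)‖ := by
  have hc : 0 ≤ c := (norm_nonneg _).trans (hz.le.trans hdc)
  calc ‖(c : ℂ) - z‖ ≤ ‖(c : ℂ) - d‖ + ‖z - d‖ := by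
        rw [norm_sub_rev z]
        exact norm_sub_le_norm_sub_add_norm_sub _ _ _
    _ < c - d + d := by
        rw [← ofReal_sub, norm_real, Real.norm_of_nonneg (sub_nonneg.2 hdc)]
        linarith
    _ = ‖(c : ℂ)‖ := by rw [norm_real, Real.norm_of_nonneg hc]; ring

theorem polyHull_empty : polyHull (∅ : Set (EuclideanSpace ℂ (Fin n))) = ∅ :=
  Set.eq_empty_of_forall_notMem fun a ha => absurd (ha 1) (by norm_num)

theorem subset_polyHull {L : Set (EuclideanSpace ℂ (Fin n))} (hL : IsCompact L) :
    L ⊆ polyHull L := fun a ha P =>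
  le_csSup ((hL.image (continuous_eval_coord P).norm).bddAbove) ⟨a, ha, rfl⟩

theorem notMem_polyHull_of_forall_norm_lt {L : Set (EuclideanSpace ℂ (Fin n))}
    (hL : IsCompact L) (hne : L.Nonempty) {a : EuclideanSpace ℂ (Fin n)}
    (P : MvPolynomial (Fin n) ℂ)
    (h : ∀ w ∈ L, ‖eval (fun j => w j) P‖ < ‖eval (fun j => a j) P‖) :
    a ∉ polyHull L := fun ha =>
  (ha P).not_gt <|
    (hL.sSup_lt_iff_of_continuous hne (continuous_eval_coord P).norm.continuousOn _).2 h

theorem HasPolynomialApproximation.polyHull_subset {L : Set (EuclideanSpace ℂ (Fin n))}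
    (hL : HasPolynomialApproximation L) (hc : IsCompact L) : polyHull L ⊆ L := by
  intro a ha
  by_contra haL
  rcases L.eq_empty_or_nonempty with rfl | hne
  · simp [polyHull_empty] at ha
  have hr : 0 < infDist a L := (hc.isClosed.notMem_iff_infDist_pos hne).1 haL
  obtain ⟨R, hR⟩ := hc.isBounded.subset_closedBall a
  obtain ⟨P, hPa, hP⟩ := hL.exists_eval_eq_zero_near_normSq hc.isBounded a (pow_pos hr 2)
  refine notMem_polyHull_of_forall_norm_lt hc hne (C ((R ^ 2 : ℝ) : ℂ) - P) (fun w hw => ?_) ha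
  have hdist : infDist a L ≤ ‖w - a‖ := by
    rw [← dist_eq_norm, dist_comm]
    exact infDist_le_dist_of_mem hw
  have hwR : ‖w - a‖ ≤ R := mem_closedBall_iff_norm.1 (hR hw)
  have hd : ‖w - a‖ ^ 2 ≤ R ^ 2 := pow_le_pow_left₀ (norm_nonneg _) hwR 2
  have hPw : ‖eval (fun j => w j) P - ((‖w - a‖ ^ 2 : ℝ) : ℂ)‖ < ‖w - a‖ ^ 2 := by
    push_cast
    exact (hP w hw).trans_le (pow_le_pow_left₀ hr.le hdist 2)
  simpa [hPa] using norm_ofReal_sub_lt hd hPw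

theorem closed_subset_of_PK_eq_CK (n : ℕ) (K : Set (EuclideanSpace ℂ (Fin n)))
    (hK : IsCompact K)
    (h : ∀ f : C(K, ℂ), ∀ ε > 0, ∃ P : MvPolynomial (Fin n) ℂ,
      ∀ z : K, ‖f z - MvPolynomial.eval (fun j => (z : EuclideanSpace ℂ (Fin n)) j) P‖ < ε)
    (L : Set (EuclideanSpace ℂ (Fin n))) (hL : IsClosed L) (hLK : L ⊆ K) :
    polyHull L = L ∧
    ∀ f : C(L, ℂ), ∀ ε > 0, ∃ P : MvPolynomial (Fin n) ℂ,
      ∀ z : L, ‖f z - MvPolynomial.eval (fun j => (z : EuclideanSpace ℂ (Fin n)) j) P‖ < ε := by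
  have hLc : IsCompact L := hK.of_isClosed_subset hL hLK
  have hLapprox : HasPolynomialApproximation L :=
    HasPolynomialApproximation.mono h hL hLK
  exact ⟨(hLapprox.polyHull_subset hLc).antisymm (subset_polyHull hLc), hLapprox⟩
end
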